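/- arXiv:2605.16780 — 5 statements merged into one kernel-verified Lean document; each statement's English description precedes it below -/
import Mathlib

section
/- The pessimistic value function (x,ε) ↦ ψ^p_ε(x) = max_{y∈S_ε(x)} F(x,y) is upper semicontinuous on X × [0,∞): for every sequence (x_k, ε_k) → (x, ε) in X × [0,∞), limsup_k ψ^p_{ε_k}(x_k) ≤ ψ^p_ε(x). -/
open Set Metric Filter Topology

/-- Lower-level value function `φ(x) := min_{v ∈ Y} f(x,v)`. -/
noncomputable def phi {n m : ℕ} (f : EuclideanSpace ℝ (Fin n) → EuclideanSpace ℝ (Fin m) → ℝ)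
    (Y : Set (EuclideanSpace ℝ (Fin m))) (x : EuclideanSpace ℝ (Fin n)) : ℝ :=
  sInf (f x '' Y)

/-- Exact lower-level solution set `S(x) := {y ∈ Y : f(x,y) = φ(x)}`. -/
noncomputable def Sexact {n m : ℕ} (f : EuclideanSpace ℝ (Fin n) → EuclideanSpace ℝ (Fin m) → ℝ)
    (Y : Set (EuclideanSpace ℝ (Fin m))) (x : EuclideanSpace ℝ (Fin n)) :
    Set (EuclideanSpace ℝ (Fin m)) :=
  {y ∈ Y | f x y = phi f Y x}

/-- The ε-optimal response set `S_ε(x) := {y ∈ Y : f(x,y) ≤ φ(x) + ε}`. -/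
noncomputable def Seps {n m : ℕ} (f : EuclideanSpace ℝ (Fin n) → EuclideanSpace ℝ (Fin m) → ℝ)
    (Y : Set (EuclideanSpace ℝ (Fin m))) (ε : ℝ) (x : EuclideanSpace ℝ (Fin n)) :
    Set (EuclideanSpace ℝ (Fin m)) :=
  {y ∈ Y | f x y ≤ phi f Y x + ε}

/-- Optimistic leader value `ψ^o_ε(x) := min_{y ∈ S_ε(x)} F(x,y)`. -/
noncomputable def psiO {n m : ℕ}
    (F f : EuclideanSpace ℝ (Fin n) → EuclideanSpace ℝ (Fin m) → ℝ)
    (Y : Set (EuclideanSpace ℝ (Fin m))) (ε : ℝ) (x : EuclideanSpace ℝ (Fin n)) : ℝ :=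
  sInf (F x '' Seps f Y ε x)

/-- Pessimistic leader value `ψ^p_ε(x) := max_{y ∈ S_ε(x)} F(x,y)`. -/
noncomputable def psiP {n m : ℕ}
    (F f : EuclideanSpace ℝ (Fin n) → EuclideanSpace ℝ (Fin m) → ℝ)
    (Y : Set (EuclideanSpace ℝ (Fin m))) (ε : ℝ) (x : EuclideanSpace ℝ (Fin n)) : ℝ :=
  sSup (F x '' Seps f Y ε x)

/-- Ambiguity premium `Δ_ε(x) := ψ^p_ε(x) − ψ^o_ε(x)`. -/
noncomputable def Delta {n m : ℕ}
    (F f : EuclideanSpace ℝ (Fin n) → EuclideanSpace ℝ (Fin m) → ℝ)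
    (Y : Set (EuclideanSpace ℝ (Fin m))) (ε : ℝ) (x : EuclideanSpace ℝ (Fin n)) : ℝ :=
  psiP F f Y ε x - psiO F f Y ε x

theorem stmt8 {n m : ℕ}
    (X : Set (EuclideanSpace ℝ (Fin n))) (Y : Set (EuclideanSpace ℝ (Fin m)))
    (hXne : X.Nonempty) (hX : IsCompact X) (hYne : Y.Nonempty) (hY : IsCompact Y)
    (F f : EuclideanSpace ℝ (Fin n) → EuclideanSpace ℝ (Fin m) → ℝ)
    (hF : Continuous fun p : EuclideanSpace ℝ (Fin n) × EuclideanSpace ℝ (Fin m) => F p.1 p.2)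
    (hf : Continuous fun p : EuclideanSpace ℝ (Fin n) × EuclideanSpace ℝ (Fin m) => f p.1 p.2) :
    ∀ (xk : ℕ → EuclideanSpace ℝ (Fin n)) (εk : ℕ → ℝ)
      (x : EuclideanSpace ℝ (Fin n)) (ε : ℝ),
      (∀ k, xk k ∈ X) → (∀ k, 0 ≤ εk k) → x ∈ X → 0 ≤ ε →
      Tendsto xk atTop (nhds x) → Tendsto εk atTop (nhds ε) →
      Filter.limsup (fun k => psiP F f Y (εk k) (xk k)) atTop ≤ psiP F f Y ε x := by
  intro xk εk x ε hxkX hεk hxX hε hxto hεto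
  -- continuity helpers
  have hfc : ∀ z : EuclideanSpace ℝ (Fin n), Continuous (f z) := fun z =>
    hf.comp (continuous_const.prodMk continuous_id)
  have hFc : ∀ z : EuclideanSpace ℝ (Fin n), Continuous (F z) := fun z =>
    hF.comp (continuous_const.prodMk continuous_id)
  -- Seps is compact and nonempty (given nonneg ε)
  have hScompact : ∀ (e : ℝ) (z : EuclideanSpace ℝ (Fin n)), IsCompact (Seps f Y e z) := by
    intro e z
    have : Seps f Y e z = Y ∩ (f z) ⁻¹' Set.Iic (phi f Y z + e) := by
      ext y; simp [Seps]
    rw [this]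
    exact hY.inter_right ((isClosed_Iic).preimage (hfc z))
  have hSsub : ∀ (e : ℝ) (z : EuclideanSpace ℝ (Fin n)), Seps f Y e z ⊆ Y := fun e z y hy => hy.1
  have hSne : ∀ (e : ℝ) (z : EuclideanSpace ℝ (Fin n)), 0 ≤ e → (Seps f Y e z).Nonempty := by
    intro e z he
    obtain ⟨y0, hy0Y, hy0⟩ := hY.exists_sInf_image_eq hYne (hfc z).continuousOn
    exact ⟨y0, hy0Y, by rw [phi, ← hy0]; linarith⟩
  have hbdd : ∀ (e : ℝ) (z : EuclideanSpace ℝ (Fin n)), BddAbove (F z '' Seps f Y e z) := by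
    intro e z
    exact ((hY.image (hFc z)).bddAbove).mono (Set.image_mono (hSsub e z))
  -- maximizer of F z on Seps
  have hmax : ∀ (e : ℝ) (z : EuclideanSpace ℝ (Fin n)), 0 ≤ e →
      ∃ y ∈ Seps f Y e z, psiP F f Y e z = F z y := by
    intro e z he
    exact (hScompact e z).exists_sSup_image_eq (hSne e z he) (hFc z).continuousOn
  choose yk hykS hykval using fun k => hmax (εk k) (xk k) (hεk k)
  -- global min of F on X × Y, giving lower bound for psiP along the sequence
  obtain ⟨p0, hp0, hp0min⟩ := (hX.prod hY).exists_isMinOn (hXne.prod hYne)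
    hF.continuousOn
  have hlb : ∀ k, F p0.1 p0.2 ≤ psiP F f Y (εk k) (xk k) := by
    intro k
    rw [hykval k]
    exact hp0min (Set.mk_mem_prod (hxkX k) (hSsub _ _ (hykS k)))
  have hcobdd : IsCoboundedUnder (· ≤ ·) atTop (fun k => psiP F f Y (εk k) (xk k)) :=
    isCoboundedUnder_le_of_le atTop hlb
  -- reduce to: for all δ > 0, eventually psiP_k ≤ psiP + δ
  refine le_of_forall_pos_le_add ?_
  intro δ hδ
  refine limsup_le_of_le hcobdd ?_
  by_contra hcon
  rw [Filter.not_eventually] at hcon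
  -- extract a subsequence where the bound fails
  obtain ⟨φ, hφmono, hφ⟩ := Filter.extraction_of_frequently_atTop hcon
  simp only [not_le] at hφ
  -- extract convergent subsequence of the maximizers
  obtain ⟨ybar, hybarY, σ, hσmono, hσto⟩ := hY.tendsto_subseq (fun j => hSsub _ _ (hykS (φ j)))
  set τ : ℕ → ℕ := φ ∘ σ with hτ
  have hτmono : StrictMono τ := hφmono.comp hσmono
  have hxτ : Tendsto (fun j => xk (τ j)) atTop (nhds x) :=
    hxto.comp hτmono.tendsto_atTop
  have hετ : Tendsto (fun j => εk (τ j)) atTop (nhds ε) :=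
    hεto.comp hτmono.tendsto_atTop
  have hyτ : Tendsto (fun j => yk (τ j)) atTop (nhds ybar) := hσto
  -- the minimizer y* at x
  obtain ⟨ystar, hystarY, hystar⟩ := hY.exists_sInf_image_eq hYne (hfc x).continuousOn
  -- f (xk) (yk) ≤ f (xk) ystar + εk  along τ
  have hkey : ∀ j, f (xk (τ j)) (yk (τ j)) ≤ f (xk (τ j)) ystar + εk (τ j) := by
    intro j
    have h1 : f (xk (τ j)) (yk (τ j)) ≤ phi f Y (xk (τ j)) + εk (τ j) := (hykS (τ j)).2
    have h2 : phi f Y (xk (τ j)) ≤ f (xk (τ j)) ystar :=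
      csInf_le ((hY.image (hfc _)).bddBelow) (Set.mem_image_of_mem _ hystarY)
    linarith
  -- pass to the limit
  have hlim1 : Tendsto (fun j => f (xk (τ j)) (yk (τ j))) atTop (nhds (f x ybar)) :=
    (hf.tendsto (x, ybar)).comp (hxτ.prodMk_nhds hyτ)
  have hlim2 : Tendsto (fun j => f (xk (τ j)) ystar + εk (τ j)) atTop
      (nhds (f x ystar + ε)) :=
    (((hf.tendsto (x, ystar)).comp (hxτ.prodMk_nhds tendsto_const_nhds)).add hετ)
  have hybarS : ybar ∈ Seps f Y ε x := by
    refine ⟨hybarY, ?_⟩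
    have := le_of_tendsto_of_tendsto' hlim1 hlim2 hkey
    rw [phi, hystar]
    linarith
  -- F converges along the subsequence
  have hFlim : Tendsto (fun j => F (xk (τ j)) (yk (τ j))) atTop (nhds (F x ybar)) :=
    (hF.tendsto (x, ybar)).comp (hxτ.prodMk_nhds hyτ)
  have hge : psiP F f Y ε x + δ ≤ F x ybar := by
    refine ge_of_tendsto hFlim (Eventually.of_forall fun j => ?_)
    calc psiP F f Y ε x + δ ≤ psiP F f Y (εk (τ j)) (xk (τ j)) := le_of_lt (hφ (σ j))
      _ = F (xk (τ j)) (yk (τ j)) := hykval (τ j)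
  have hle : F x ybar ≤ psiP F f Y ε x :=
    le_csSup (hbdd ε x) (Set.mem_image_of_mem _ hybarS)
  linarith
end

section
/- The optimistic value function (x,ε) ↦ ψ^o_ε(x) = min_{y∈S_ε(x)} F(x,y) is lower semicontinuous on X × [0,∞): for every sequence (x_k, ε_k) → (x, ε) in X × [0,∞), liminf_k ψ^o_{ε_k}(x_k) ≥ ψ^o_ε(x). -/
open Set Metric Filter Topology

section Aux

variable {n m : ℕ}

lemma seps_compact {Y : Set (EuclideanSpace ℝ (Fin m))} (hY : IsCompact Y)
    {f : EuclideanSpace ℝ (Fin n) → EuclideanSpace ℝ (Fin m) → ℝ}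
    (x : EuclideanSpace ℝ (Fin n)) (hfx : Continuous (f x)) (ε : ℝ) :
    IsCompact (Seps f Y ε x) := by
  have : Seps f Y ε x = Y ∩ {y | f x y ≤ phi f Y x + ε} := rfl
  rw [this]
  exact hY.inter_right (isClosed_le hfx continuous_const)

lemma seps_nonempty {Y : Set (EuclideanSpace ℝ (Fin m))} (hY : IsCompact Y)
    (hYne : Y.Nonempty)
    {f : EuclideanSpace ℝ (Fin n) → EuclideanSpace ℝ (Fin m) → ℝ}
    (x : EuclideanSpace ℝ (Fin n)) (hfx : Continuous (f x)) {ε : ℝ} (hε : 0 ≤ ε) :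
    (Seps f Y ε x).Nonempty := by
  obtain ⟨y, hyY, hmin⟩ := hY.exists_isMinOn hYne hfx.continuousOn
  refine ⟨y, hyY, ?_⟩
  have h1 : f x y ≤ phi f Y x := by
    apply le_csInf (hYne.image _)
    rintro b ⟨v, hv, rfl⟩
    exact hmin hv
  linarith

lemma psiO_attained {Y : Set (EuclideanSpace ℝ (Fin m))} (hY : IsCompact Y)
    (hYne : Y.Nonempty)
    {F f : EuclideanSpace ℝ (Fin n) → EuclideanSpace ℝ (Fin m) → ℝ}
    (x : EuclideanSpace ℝ (Fin n)) (hfx : Continuous (f x)) (hFx : Continuous (F x))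
    {ε : ℝ} (hε : 0 ≤ ε) :
    ∃ y ∈ Seps f Y ε x, F x y = psiO F f Y ε x := by
  have hScomp := seps_compact hY x hfx ε
  have hSne := seps_nonempty hY hYne x hfx hε
  obtain ⟨y, hyS, hmin⟩ := hScomp.exists_isMinOn hSne hFx.continuousOn
  refine ⟨y, hyS, le_antisymm ?_ (csInf_le ?_ (Set.mem_image_of_mem _ hyS))⟩
  · apply le_csInf (hSne.image _)
    rintro b ⟨v, hv, rfl⟩
    exact hmin hv
  · exact ⟨F x y, by rintro b ⟨v, hv, rfl⟩; exact hmin hv⟩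

lemma psiO_le {Y : Set (EuclideanSpace ℝ (Fin m))} (hY : IsCompact Y)
    {F f : EuclideanSpace ℝ (Fin n) → EuclideanSpace ℝ (Fin m) → ℝ}
    (x : EuclideanSpace ℝ (Fin n)) (hfx : Continuous (f x)) (hFx : Continuous (F x))
    (ε : ℝ) {y : EuclideanSpace ℝ (Fin m)} (hy : y ∈ Seps f Y ε x) :
    psiO F f Y ε x ≤ F x y := by
  apply csInf_le _ (Set.mem_image_of_mem _ hy)
  have hScomp := seps_compact hY x hfx ε
  exact ((hScomp.image hFx).bddBelow).mono (Set.image_mono (fun _ h => h))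

end Aux

theorem stmt9 {n m : ℕ}
    (X : Set (EuclideanSpace ℝ (Fin n))) (Y : Set (EuclideanSpace ℝ (Fin m)))
    (hXne : X.Nonempty) (hX : IsCompact X) (hYne : Y.Nonempty) (hY : IsCompact Y)
    (F f : EuclideanSpace ℝ (Fin n) → EuclideanSpace ℝ (Fin m) → ℝ)
    (hF : Continuous fun p : EuclideanSpace ℝ (Fin n) × EuclideanSpace ℝ (Fin m) => F p.1 p.2)
    (hf : Continuous fun p : EuclideanSpace ℝ (Fin n) × EuclideanSpace ℝ (Fin m) => f p.1 p.2) :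
    ∀ (xk : ℕ → EuclideanSpace ℝ (Fin n)) (εk : ℕ → ℝ)
      (x : EuclideanSpace ℝ (Fin n)) (ε : ℝ),
      (∀ k, xk k ∈ X) → (∀ k, 0 ≤ εk k) → x ∈ X → 0 ≤ ε →
      Tendsto xk atTop (nhds x) → Tendsto εk atTop (nhds ε) →
      psiO F f Y ε x ≤ Filter.liminf (fun k => psiO F f Y (εk k) (xk k)) atTop := by
  intro xk εk x ε hxkX hεk0 hxX hε0 hxk hεkl
  have hfx : ∀ z, Continuous (f z) := fun z => hf.comp (Continuous.prodMk_right z)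
  have hFx : ∀ z, Continuous (F z) := fun z => hF.comp (Continuous.prodMk_right z)
  -- choose minimizers y k
  have hyk : ∀ k, ∃ y ∈ Seps f Y (εk k) (xk k), F (xk k) y = psiO F f Y (εk k) (xk k) :=
    fun k => psiO_attained hY hYne (xk k) (hfx _) (hFx _) (hεk0 k)
  choose y hyS hyval using hyk
  have hyY : ∀ k, y k ∈ Y := fun k => (hyS k).1
  -- lower bound for the sequence
  obtain ⟨⟨x₀, y₀⟩, hp₀, hmin₀⟩ := (hX.prod hY).exists_isMinOn (hXne.prod hYne)
    hF.continuousOn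
  have hbdd : Filter.IsBoundedUnder (· ≥ ·) atTop (fun k => psiO F f Y (εk k) (xk k)) := by
    refine ⟨F x₀ y₀, Filter.eventually_atTop.2 ⟨0, fun k _ => ?_⟩⟩
    show F x₀ y₀ ≤ psiO F f Y (εk k) (xk k)
    rw [← hyval k]
    exact hmin₀ (Set.mk_mem_prod (hxkX k) (hyY k))
  obtain ⟨⟨x₁, y₁⟩, hp₁, hmax₁⟩ := (hX.prod hY).exists_isMaxOn (hXne.prod hYne)
    hF.continuousOn
  have hbdd2 : Filter.IsBoundedUnder (· ≤ ·) atTop (fun k => psiO F f Y (εk k) (xk k)) := by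
    refine ⟨F x₁ y₁, Filter.eventually_atTop.2 ⟨0, fun k _ => ?_⟩⟩
    show psiO F f Y (εk k) (xk k) ≤ F x₁ y₁
    rw [← hyval k]
    exact hmax₁ (Set.mk_mem_prod (hxkX k) (hyY k))
  by_contra hcon
  push_neg at hcon
  obtain ⟨b, hb1, hb2⟩ := exists_between hcon
  have hfreq : ∃ᶠ k in atTop, psiO F f Y (εk k) (xk k) < b :=
    frequently_lt_of_liminf_lt hbdd2.isCoboundedUnder_ge hb1
  obtain ⟨φ, hφ, hφb⟩ := Filter.extraction_of_frequently_atTop hfreq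
  -- extract convergent subsequence of y ∘ φ
  obtain ⟨ybar, hybarY, σ, hσ, hyσ⟩ := hY.tendsto_subseq (fun j => hyY (φ j))
  have hxσ : Tendsto (fun j => xk (φ (σ j))) atTop (nhds x) :=
    hxk.comp ((hφ.comp hσ).tendsto_atTop)
  have hεσ : Tendsto (fun j => εk (φ (σ j))) atTop (nhds ε) :=
    hεkl.comp ((hφ.comp hσ).tendsto_atTop)
  have hpair : Tendsto (fun j => (xk (φ (σ j)), y (φ (σ j)))) atTop (nhds (x, ybar)) :=
    hxσ.prodMk_nhds hyσ
  -- F (x, ybar) ≤ b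
  have hFlim : Tendsto (fun j => F (xk (φ (σ j))) (y (φ (σ j)))) atTop (nhds (F x ybar)) :=
    (hF.tendsto (x, ybar)).comp hpair
  have hFb : F x ybar ≤ b := by
    apply le_of_tendsto hFlim
    filter_upwards with j
    rw [hyval (φ (σ j))]
    exact le_of_lt (hφb (σ j))
  -- ybar ∈ Seps f Y ε x
  obtain ⟨v, hvY, hvmin⟩ := hY.exists_isMinOn hYne (hfx x).continuousOn
  have hvphi : f x v ≤ phi f Y x :=
    le_csInf (hYne.image _) (by rintro c ⟨w, hw, rfl⟩; exact hvmin hw)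
  have hflim : Tendsto (fun j => f (xk (φ (σ j))) (y (φ (σ j)))) atTop (nhds (f x ybar)) :=
    (hf.tendsto (x, ybar)).comp hpair
  have hflimv : Tendsto (fun j => f (xk (φ (σ j))) v + εk (φ (σ j))) atTop
      (nhds (f x v + ε)) := by
    have : Tendsto (fun j => f (xk (φ (σ j))) v) atTop (nhds (f x v)) :=
      (hf.tendsto (x, v)).comp (hxσ.prodMk_nhds tendsto_const_nhds)
    exact this.add hεσ
  have hmem : ybar ∈ Seps f Y ε x := by
    refine ⟨hybarY, ?_⟩
    have key : f x ybar ≤ f x v + ε := by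
      apply le_of_tendsto_of_tendsto' hflim hflimv
      intro j
      have h1 : f (xk (φ (σ j))) (y (φ (σ j))) ≤ phi f Y (xk (φ (σ j))) + εk (φ (σ j)) :=
        (hyS (φ (σ j))).2
      have h2 : phi f Y (xk (φ (σ j))) ≤ f (xk (φ (σ j))) v :=
        csInf_le (hY.image (hfx _)).bddBelow (Set.mem_image_of_mem _ hvY)
      linarith [h1, h2]
    linarith [key, hvphi]
  exact absurd (psiO_le hY x (hfx x) (hFx x) ε hmem) (by linarith)
end

section
/- Let x₀ ∈ X and suppose there are a neighborhood U of x₀ and a constant μ̲ > 0 such that for every x ∈ U ∩ X the quadratic lower-level growth condition holds with modulus μ(x) ≥ μ̲, i.e. f(x,y) ≥ φ(x) + μ̲·dist(y, S(x))² for all y ∈ Y. Then the correspondence (x,ε) ↦ S_ε(x) is lower semicontinuous at (x₀, 0): for every y₀ ∈ S(x₀) and every sequence (x_k, ε_k) → (x₀, 0) with x_k ∈ X and ε_k ≥ 0, there exist points y_k ∈ S_{ε_k}(x_k) with y_k → y₀. -/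
open Set Metric Filter Topology

theorem stmt11 {n m : ℕ}
    (X : Set (EuclideanSpace ℝ (Fin n))) (Y : Set (EuclideanSpace ℝ (Fin m)))
    (hXne : X.Nonempty) (hX : IsCompact X) (hYne : Y.Nonempty) (hY : IsCompact Y)
    (f : EuclideanSpace ℝ (Fin n) → EuclideanSpace ℝ (Fin m) → ℝ)
    (hf : Continuous fun p : EuclideanSpace ℝ (Fin n) × EuclideanSpace ℝ (Fin m) => f p.1 p.2)
    (x₀ : EuclideanSpace ℝ (Fin n)) (hx₀ : x₀ ∈ X)
    (U : Set (EuclideanSpace ℝ (Fin n))) (hU : U ∈ nhds x₀)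
    (μ : ℝ) (hμ : 0 < μ)
    (hQG : ∀ x ∈ U ∩ X, ∀ y ∈ Y,
        phi f Y x + μ * (Metric.infDist y (Sexact f Y x)) ^ 2 ≤ f x y) :
    ∀ y₀ ∈ Sexact f Y x₀,
      ∀ (xk : ℕ → EuclideanSpace ℝ (Fin n)) (εk : ℕ → ℝ),
        (∀ k, xk k ∈ X) → (∀ k, 0 ≤ εk k) →
        Tendsto xk atTop (nhds x₀) → Tendsto εk atTop (nhds 0) →
        ∃ yk : ℕ → EuclideanSpace ℝ (Fin m),
          (∀ k, yk k ∈ Seps f Y (εk k) (xk k)) ∧ Tendsto yk atTop (nhds y₀) := by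
  intro y₀ hy₀ xk εk hxkX hεk hxkt hεkt
  have hy₀Y : y₀ ∈ Y := hy₀.1
  have hphi0 : f x₀ y₀ = phi f Y x₀ := hy₀.2
  have hfx : ∀ x, Continuous (f x) := fun x =>
    hf.comp (continuous_const.prodMk continuous_id)
  have hbdd : ∀ x, BddBelow (f x '' Y) := fun x => (hY.image (hfx x)).bddBelow
  have hphile : ∀ x, ∀ y ∈ Y, phi f Y x ≤ f x y := fun x y hy =>
    csInf_le (hbdd x) ⟨y, hy, rfl⟩
  have hSne : ∀ x, ∃ w, w ∈ Sexact f Y x ∧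
      Metric.infDist y₀ (Sexact f Y x) = dist y₀ w := by
    intro x
    obtain ⟨w, hwY, hwmin⟩ := hY.exists_isMinOn hYne (hfx x).continuousOn
    have hwS : w ∈ Sexact f Y x := by
      refine ⟨hwY, le_antisymm (le_csInf (hYne.image _) ?_) (hphile x w hwY)⟩
      rintro b ⟨z, hz, rfl⟩
      exact hwmin hz
    have hScomp : IsCompact (Sexact f Y x) :=
      hY.inter_right (isClosed_eq (hfx x) continuous_const)
    obtain ⟨v, hv, hvd⟩ := hScomp.exists_infDist_eq_dist ⟨w, hwS⟩ y₀
    exact ⟨v, hv, hvd⟩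
  choose w hwS hwd using fun k => hSne (xk k)
  have hwY : ∀ k, w k ∈ Y := fun k => (hwS k).1
  have hwphi : ∀ k, f (xk k) (w k) = phi f Y (xk k) := fun k => (hwS k).2
  -- a k := f (xk k) y₀ - f x₀ y₀ → 0
  have ha : Tendsto (fun k => f (xk k) y₀ - f x₀ y₀) atTop (nhds 0) := by
    have h1 : Continuous (fun x => f x y₀) :=
      hf.comp (continuous_id.prodMk continuous_const)
    have h2 : Tendsto (fun k => f (xk k) y₀) atTop (nhds (f x₀ y₀)) :=
      (h1.tendsto x₀).comp hxkt
    simpa using h2.sub_const (f x₀ y₀)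
  -- h k := f x₀ (w k) - f (xk k) (w k) → 0 via uniform continuity on X ×ˢ Y
  have huc : UniformContinuousOn
      (fun p : EuclideanSpace ℝ (Fin n) × EuclideanSpace ℝ (Fin m) => f p.1 p.2)
      (X ×ˢ Y) := (hX.prod hY).uniformContinuousOn_of_continuous hf.continuousOn
  have hb : Tendsto (fun k => f x₀ (w k) - f (xk k) (w k)) atTop (nhds 0) := by
    rw [Metric.tendsto_atTop]
    intro ε hε
    rw [Metric.uniformContinuousOn_iff] at huc
    obtain ⟨δ, hδ, hδ'⟩ := huc ε hε
    obtain ⟨N, hN⟩ := (Metric.tendsto_atTop.mp hxkt) δ hδ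
    refine ⟨N, fun k hk => ?_⟩
    have hpq : dist ((x₀, w k) : _ × _) ((xk k, w k) : _ × _) < δ := by
      rw [Prod.dist_eq]
      simp only [dist_self]
      exact max_lt (by rw [dist_comm]; exact hN k hk) hδ
    have := hδ' (x₀, w k) ⟨hx₀, hwY k⟩ (xk k, w k) ⟨hxkX k, hwY k⟩ hpq
    simpa [Real.dist_eq] using this
  have hab : Tendsto (fun k => (f (xk k) y₀ - f x₀ y₀) + (f x₀ (w k) - f (xk k) (w k)))
      atTop (nhds 0) := by simpa using ha.add hb
  -- g k := f (xk k) y₀ - phi f Y (xk k) → 0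
  have hg0 : ∀ k, 0 ≤ f (xk k) y₀ - phi f Y (xk k) := fun k =>
    sub_nonneg.mpr (hphile (xk k) y₀ hy₀Y)
  have hgle : ∀ k, f (xk k) y₀ - phi f Y (xk k) ≤
      (f (xk k) y₀ - f x₀ y₀) + (f x₀ (w k) - f (xk k) (w k)) := by
    intro k
    have h1 : f x₀ y₀ ≤ f x₀ (w k) := hphi0 ▸ hphile x₀ (w k) (hwY k)
    have h2 := hwphi k
    linarith
  have hg : Tendsto (fun k => f (xk k) y₀ - phi f Y (xk k)) atTop (nhds 0) :=
    squeeze_zero hg0 hgle hab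
  -- distance dist y₀ (w k) → 0
  have hdist : Tendsto (fun k => dist y₀ (w k)) atTop (nhds 0) := by
    have hsqrt : Tendsto (fun k => Real.sqrt ((f (xk k) y₀ - phi f Y (xk k)) / μ))
        atTop (nhds 0) := by
      have h0 : Tendsto (fun k => (f (xk k) y₀ - phi f Y (xk k)) / μ) atTop (nhds 0) := by
        simpa using hg.div_const μ
      simpa [Real.sqrt_zero, Function.comp_def] using (Real.continuous_sqrt.tendsto 0).comp h0
    refine squeeze_zero' (Eventually.of_forall fun k => dist_nonneg) ?_ hsqrt
    have hUev : ∀ᶠ k in atTop, xk k ∈ U := hxkt.eventually_mem hU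
    filter_upwards [hUev] with k hkU
    have hq := hQG (xk k) ⟨hkU, hxkX k⟩ y₀ hy₀Y
    rw [hwd k] at hq
    rw [Real.le_sqrt dist_nonneg (div_nonneg (hg0 k) hμ.le)]
    rw [le_div_iff₀ hμ]
    linarith
  refine ⟨w, fun k => ⟨hwY k, by rw [hwphi k]; linarith [hεk k]⟩, ?_⟩
  rw [tendsto_iff_dist_tendsto_zero]
  simpa [dist_comm] using hdist
end

section
/- Let x₀ ∈ X and ε₀ > 0, and suppose Y is convex and f(x,·) is convex on Y for all x in a neighborhood of x₀ in X. Then the correspondence (x,ε) ↦ S_ε(x) is lower semicontinuous at (x₀, ε₀): for every y₀ ∈ S_{ε₀}(x₀) and every sequence (x_k, ε_k) → (x₀, ε₀) with x_k ∈ X and ε_k ≥ 0, there exist points y_k ∈ S_{ε_k}(x_k) with y_k → y₀. -/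
open Set Metric Filter Topology

section helpers
variable {n m : ℕ} {f : EuclideanSpace ℝ (Fin n) → EuclideanSpace ℝ (Fin m) → ℝ}
  {Y : Set (EuclideanSpace ℝ (Fin m))}

lemma cont_fx (hf : Continuous fun p : EuclideanSpace ℝ (Fin n) × EuclideanSpace ℝ (Fin m) => f p.1 p.2)
    (x : EuclideanSpace ℝ (Fin n)) : Continuous (f x) :=
  hf.comp (Continuous.prodMk_right x)

lemma phi_le_of_mem (hY : IsCompact Y)
    (hf : Continuous fun p : EuclideanSpace ℝ (Fin n) × EuclideanSpace ℝ (Fin m) => f p.1 p.2)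
    (x : EuclideanSpace ℝ (Fin n)) {y} (hy : y ∈ Y) : phi f Y x ≤ f x y :=
  csInf_le (hY.image (cont_fx hf x)).bddBelow (mem_image_of_mem _ hy)

lemma exists_phi_min (hY : IsCompact Y) (hYne : Y.Nonempty)
    (hf : Continuous fun p : EuclideanSpace ℝ (Fin n) × EuclideanSpace ℝ (Fin m) => f p.1 p.2)
    (x : EuclideanSpace ℝ (Fin n)) : ∃ y ∈ Y, f x y = phi f Y x := by
  obtain ⟨y, hy, hmin⟩ := hY.exists_isMinOn hYne (cont_fx hf x).continuousOn
  refine ⟨y, hy, le_antisymm ?_ (phi_le_of_mem hY hf x hy)⟩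
  refine le_csInf (hYne.image _) ?_
  rintro b ⟨z, hz, rfl⟩
  exact hmin hz

lemma phi_tendsto {X : Set (EuclideanSpace ℝ (Fin n))} (hX : IsCompact X) (hY : IsCompact Y)
    (hYne : Y.Nonempty)
    (hf : Continuous fun p : EuclideanSpace ℝ (Fin n) × EuclideanSpace ℝ (Fin m) => f p.1 p.2)
    {x₀ : EuclideanSpace ℝ (Fin n)} (hx₀ : x₀ ∈ X) {xk : ℕ → EuclideanSpace ℝ (Fin n)}
    (hxk : ∀ k, xk k ∈ X) (hlim : Tendsto xk atTop (nhds x₀)) :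
    Tendsto (fun k => phi f Y (xk k)) atTop (nhds (phi f Y x₀)) := by
  rw [Metric.tendsto_nhds]
  intro ε hε
  have huc := (hX.prod hY).uniformContinuousOn_of_continuous hf.continuousOn
  obtain ⟨δ, hδ, hδ'⟩ := Metric.uniformContinuousOn_iff.1 huc ε hε
  filter_upwards [Metric.tendsto_nhds.1 hlim δ hδ] with k hk
  have key : ∀ x ∈ X, dist x x₀ < δ → ∀ y ∈ Y, dist (f x y) (f x₀ y) < ε := by
    intro x hx hd y hy
    have : dist ((x, y) : _ × _) (x₀, y) < δ := by
      rw [Prod.dist_eq]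
      simpa [hδ] using hd
    exact hδ' _ (mk_mem_prod hx hy) _ (mk_mem_prod hx₀ hy) this
  rw [Real.dist_eq, abs_sub_lt_iff]
  obtain ⟨y₁, hy₁, hy₁'⟩ := exists_phi_min hY hYne hf x₀
  obtain ⟨y₂, hy₂, hy₂'⟩ := exists_phi_min hY hYne hf (xk k)
  constructor
  · have h1 : phi f Y (xk k) ≤ f (xk k) y₁ := phi_le_of_mem hY hf _ hy₁
    have h2 := key (xk k) (hxk k) hk y₁ hy₁
    rw [Real.dist_eq, abs_sub_lt_iff] at h2
    rw [← hy₁']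
    linarith [h2.1]
  · have h1 : phi f Y x₀ ≤ f x₀ y₂ := phi_le_of_mem hY hf x₀ hy₂
    have h2 := key (xk k) (hxk k) hk y₂ hy₂
    rw [Real.dist_eq, abs_sub_lt_iff] at h2
    rw [← hy₂']
    linarith [h2.2]

end helpers

theorem stmt12 {n m : ℕ}
    (X : Set (EuclideanSpace ℝ (Fin n))) (Y : Set (EuclideanSpace ℝ (Fin m)))
    (hXne : X.Nonempty) (hX : IsCompact X) (hYne : Y.Nonempty) (hY : IsCompact Y)
    (hYconv : Convex ℝ Y)
    (f : EuclideanSpace ℝ (Fin n) → EuclideanSpace ℝ (Fin m) → ℝ)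
    (hf : Continuous fun p : EuclideanSpace ℝ (Fin n) × EuclideanSpace ℝ (Fin m) => f p.1 p.2)
    (x₀ : EuclideanSpace ℝ (Fin n)) (hx₀ : x₀ ∈ X) (ε₀ : ℝ) (hε₀ : 0 < ε₀)
    (U : Set (EuclideanSpace ℝ (Fin n))) (hU : U ∈ nhds x₀)
    (hconv : ∀ x ∈ U ∩ X, ConvexOn ℝ Y (f x)) :
    ∀ y₀ ∈ Seps f Y ε₀ x₀,
      ∀ (xk : ℕ → EuclideanSpace ℝ (Fin n)) (εk : ℕ → ℝ),
        (∀ k, xk k ∈ X) → (∀ k, 0 ≤ εk k) →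
        Tendsto xk atTop (nhds x₀) → Tendsto εk atTop (nhds ε₀) →
        ∃ yk : ℕ → EuclideanSpace ℝ (Fin m),
          (∀ k, yk k ∈ Seps f Y (εk k) (xk k)) ∧ Tendsto yk atTop (nhds y₀) := by
  intro y₀ hy₀ xk εk hxkX hεk hxlim hεlim
  obtain ⟨hy₀Y, hy₀le⟩ := hy₀
  classical
  choose yhat hyhatY hyhateq using fun k => exists_phi_min hY hYne hf (xk k)
  set a : ℕ → ℝ := fun k => f (xk k) y₀ - phi f Y (xk k) with ha_def
  have hphi_lim := phi_tendsto hX hY hYne hf hx₀ hxkX hxlim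
  have hfy₀_lim : Tendsto (fun k => f (xk k) y₀) atTop (nhds (f x₀ y₀)) := by
    have : Tendsto (fun k => ((xk k, y₀) : _ × _)) atTop (nhds (x₀, y₀)) :=
      hxlim.prodMk_nhds tendsto_const_nhds
    exact (hf.tendsto (x₀, y₀)).comp this
  have ha_lim : Tendsto a atTop (nhds (f x₀ y₀ - phi f Y x₀)) := hfy₀_lim.sub hphi_lim
  set A : ℝ := f x₀ y₀ - phi f Y x₀ with hA_def
  have hAε : A ≤ ε₀ := by simp only [hA_def]; linarith
  set t : ℕ → ℝ := fun k => if a k ≤ εk k then (0:ℝ) else 1 - εk k / a k with ht_def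
  have hapos : ∀ k, ¬ a k ≤ εk k → 0 < a k := fun k h =>
    lt_of_le_of_lt (hεk k) (not_le.1 h)
  have ht0 : ∀ k, 0 ≤ t k := by
    intro k
    simp only [ht_def]
    split
    · exact le_refl 0
    · rename_i h
      have hp := hapos k h
      have : εk k / a k ≤ 1 := (div_le_one hp).2 (not_le.1 h).le
      linarith
  have ht1 : ∀ k, t k ≤ 1 := by
    intro k
    simp only [ht_def]
    split
    · norm_num
    · rename_i h
      have := div_nonneg (hεk k) (hapos k h).le
      linarith
  have hkey : ∀ k, (1 - t k) * a k ≤ εk k := by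
    intro k
    simp only [ht_def]
    split
    · rename_i h; simpa using h
    · rename_i h
      have hp := hapos k h
      have : (1 - (1 - εk k / a k)) * a k = εk k := by
        field_simp
        ring
      linarith [this]
  set yk : ℕ → EuclideanSpace ℝ (Fin m) := fun k =>
    if xk k ∈ U then (1 - t k) • y₀ + t k • yhat k else yhat k with hyk_def
  have hmem : ∀ k, yk k ∈ Seps f Y (εk k) (xk k) := by
    intro k
    simp only [hyk_def]
    by_cases hU' : xk k ∈ U
    · rw [if_pos hU']
      have h1mt : 0 ≤ 1 - t k := by linarith [ht1 k]
      have hYmem : (1 - t k) • y₀ + t k • yhat k ∈ Y :=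
        hYconv hy₀Y (hyhatY k) h1mt (ht0 k) (by ring)
      refine ⟨hYmem, ?_⟩
      have hcv := (hconv (xk k) ⟨hU', hxkX k⟩).2 hy₀Y (hyhatY k) h1mt (ht0 k) (by ring)
      have hfy : f (xk k) y₀ = phi f Y (xk k) + a k := by simp [ha_def]
      have hfyhat := hyhateq k
      have := hkey k
      rw [smul_eq_mul, smul_eq_mul] at hcv
      nlinarith [hcv]
    · rw [if_neg hU']
      refine ⟨hyhatY k, ?_⟩
      rw [hyhateq k]
      linarith [hεk k]
  refine ⟨yk, hmem, ?_⟩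
  -- t tends to 0
  have ht_lim : Tendsto t atTop (nhds 0) := by
    rcases lt_or_eq_of_le hAε with hlt | heq
    · have hev : ∀ᶠ k in atTop, a k ≤ εk k := by
        have hsub : Tendsto (fun k => εk k - a k) atTop (nhds (ε₀ - A)) := hεlim.sub ha_lim
        filter_upwards [hsub.eventually (eventually_gt_nhds (show (0:ℝ) < ε₀ - A by linarith))]
          with k hk
        linarith
      refine Tendsto.congr' ?_ tendsto_const_nhds
      filter_upwards [hev] with k hk
      simp [ht_def, hk]
    · have hApos : 0 < A := heq ▸ hε₀
      have ha_lim' : Tendsto a atTop (nhds A) := ha_lim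
      have hs : Tendsto (fun k => 1 - εk k / a k) atTop (nhds 0) := by
        have h1 : Tendsto (fun k => εk k / a k) atTop (nhds (ε₀ / A)) :=
          hεlim.div ha_lim' hApos.ne'
        have h2 : ε₀ / A = 1 := by rw [← heq]; field_simp
        have h3 := h1.const_sub 1
        rw [h2] at h3
        simpa using h3
      have habs : Tendsto (fun k => |1 - εk k / a k|) atTop (nhds 0) := by
        have := hs.abs
        simpa using this
      refine squeeze_zero ht0 ?_ habs
      intro k
      simp only [ht_def]
      split
      · positivity
      · exact le_abs_self _
  -- convergence of yk
  obtain ⟨r, hr⟩ := hY.isBounded.subset_closedBall 0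
  have hbound : ∀ᶠ k in atTop, dist (yk k) y₀ ≤ t k * (r + ‖y₀‖) := by
    filter_upwards [hxlim.eventually_mem hU] with k hk
    have : yk k = (1 - t k) • y₀ + t k • yhat k := by simp [hyk_def, hk]
    rw [this, dist_eq_norm]
    have heq2 : (1 - t k) • y₀ + t k • yhat k - y₀ = t k • (yhat k - y₀) := by module
    rw [heq2, norm_smul, Real.norm_eq_abs, abs_of_nonneg (ht0 k)]
    have h1 : ‖yhat k - y₀‖ ≤ r + ‖y₀‖ := by
      have := mem_closedBall_zero_iff.1 (hr (hyhatY k))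
      calc ‖yhat k - y₀‖ ≤ ‖yhat k‖ + ‖y₀‖ := norm_sub_le _ _
        _ ≤ r + ‖y₀‖ := by linarith
    exact mul_le_mul_of_nonneg_left h1 (ht0 k)
  rw [tendsto_iff_dist_tendsto_zero]
  have hmul : Tendsto (fun k => t k * (r + ‖y₀‖)) atTop (nhds 0) := by
    have h4 := ht_lim.mul_const (r + ‖y₀‖)
    rw [zero_mul] at h4
    exact h4
  exact squeeze_zero' (Eventually.of_forall fun k => dist_nonneg) hbound hmul
end

section
/- Let x₀ ∈ X and suppose there are a neighborhood U of x₀ and a constant μ̲ > 0 such that f(x,y) ≥ φ(x) + μ̲·dist(y, S(x))² for all y ∈ Y and all x ∈ U ∩ X. Then the functions ψ^o_ε(x), ψ^p_ε(x), and Δ_ε(x) are continuous at the point (x₀, 0) of X × [0,∞): for every sequence (x_k, ε_k) → (x₀, 0) with x_k ∈ X and ε_k ≥ 0, one has ψ^o_{ε_k}(x_k) → ψ^o_0(x₀), ψ^p_{ε_k}(x_k) → ψ^p_0(x₀), and Δ_{ε_k}(x_k) → Δ_0(x₀). -/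
open Set Metric Filter Topology

/-- minimum attained on compact nonempty set: sInf of image equals value at a minimizer. -/
lemma aux_sInf_attained {E : Type*} [MetricSpace E] {A : Set E} (hA : IsCompact A)
    (hne : A.Nonempty) {g : E → ℝ} (hg : ContinuousOn g A) :
    ∃ a ∈ A, sInf (g '' A) = g a ∧ ∀ b ∈ A, g a ≤ g b := by
  obtain ⟨a, ha, hmin⟩ := hA.exists_isMinOn hne hg
  refine ⟨a, ha, ?_, fun b hb => hmin hb⟩
  exact IsLeast.csInf_eq ⟨⟨a, ha, rfl⟩, by rintro _ ⟨b, hb, rfl⟩; exact hmin hb⟩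

lemma aux_sSup_attained {E : Type*} [MetricSpace E] {A : Set E} (hA : IsCompact A)
    (hne : A.Nonempty) {g : E → ℝ} (hg : ContinuousOn g A) :
    ∃ a ∈ A, sSup (g '' A) = g a ∧ ∀ b ∈ A, g b ≤ g a := by
  obtain ⟨a, ha, hmax⟩ := hA.exists_isMaxOn hne hg
  refine ⟨a, ha, ?_, fun b hb => hmax hb⟩
  exact IsGreatest.csSup_eq ⟨⟨a, ha, rfl⟩, by rintro _ ⟨b, hb, rfl⟩; exact hmax hb⟩

/-- key comparison lemma for inf/sup over close sets. -/
lemma aux_close_inf_sup {E : Type*} [MetricSpace E] {A B : Set E}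
    (hA : IsCompact A) (hAne : A.Nonempty) (hB : IsCompact B) (hBne : B.Nonempty)
    {g h : E → ℝ} (hg : ContinuousOn g A) (hh : ContinuousOn h B)
    {η : ℝ}
    (hAB : ∀ a ∈ A, ∃ b ∈ B, |g a - h b| ≤ η)
    (hBA : ∀ b ∈ B, ∃ a ∈ A, |g a - h b| ≤ η) :
    |sInf (g '' A) - sInf (h '' B)| ≤ η ∧ |sSup (g '' A) - sSup (h '' B)| ≤ η := by
  obtain ⟨a₀, ha₀, hIa, hmina⟩ := aux_sInf_attained hA hAne hg
  obtain ⟨b₀, hb₀, hIb, hminb⟩ := aux_sInf_attained hB hBne hh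
  obtain ⟨a₁, ha₁, hSa, hmaxa⟩ := aux_sSup_attained hA hAne hg
  obtain ⟨b₁, hb₁, hSb, hmaxb⟩ := aux_sSup_attained hB hBne hh
  constructor
  · rw [hIa, hIb, abs_le]
    obtain ⟨b, hb, hab⟩ := hAB a₀ ha₀
    obtain ⟨a, ha, hba⟩ := hBA b₀ hb₀
    rw [abs_le] at hab hba
    have h1 := hminb b hb
    have h2 := hmina a ha
    constructor <;> linarith [hab.1, hab.2, hba.1, hba.2]
  · rw [hSa, hSb, abs_le]
    obtain ⟨b, hb, hab⟩ := hAB a₁ ha₁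
    obtain ⟨a, ha, hba⟩ := hBA b₁ hb₁
    rw [abs_le] at hab hba
    have h1 := hmaxb b hb
    have h2 := hmaxa a ha
    constructor <;> linarith [hab.1, hab.2, hba.1, hba.2]

theorem stmt13 {n m : ℕ}
    (X : Set (EuclideanSpace ℝ (Fin n))) (Y : Set (EuclideanSpace ℝ (Fin m)))
    (hXne : X.Nonempty) (hX : IsCompact X) (hYne : Y.Nonempty) (hY : IsCompact Y)
    (F f : EuclideanSpace ℝ (Fin n) → EuclideanSpace ℝ (Fin m) → ℝ)
    (hF : Continuous fun p : EuclideanSpace ℝ (Fin n) × EuclideanSpace ℝ (Fin m) => F p.1 p.2)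
    (hf : Continuous fun p : EuclideanSpace ℝ (Fin n) × EuclideanSpace ℝ (Fin m) => f p.1 p.2)
    (x₀ : EuclideanSpace ℝ (Fin n)) (hx₀ : x₀ ∈ X)
    (U : Set (EuclideanSpace ℝ (Fin n))) (hU : U ∈ nhds x₀)
    (μ : ℝ) (hμ : 0 < μ)
    (hQG : ∀ x ∈ U ∩ X, ∀ y ∈ Y,
        phi f Y x + μ * (Metric.infDist y (Sexact f Y x)) ^ 2 ≤ f x y) :
    ∀ (xk : ℕ → EuclideanSpace ℝ (Fin n)) (εk : ℕ → ℝ),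
      (∀ k, xk k ∈ X) → (∀ k, 0 ≤ εk k) →
      Tendsto xk atTop (nhds x₀) → Tendsto εk atTop (nhds 0) →
      Tendsto (fun k => psiO F f Y (εk k) (xk k)) atTop (nhds (psiO F f Y 0 x₀)) ∧
      Tendsto (fun k => psiP F f Y (εk k) (xk k)) atTop (nhds (psiP F f Y 0 x₀)) ∧
      Tendsto (fun k => Delta F f Y (εk k) (xk k)) atTop (nhds (Delta F f Y 0 x₀)) := by
  intro xk εk hxkX hεknn hxkt hεkt
  have hfy : ∀ x, Continuous (fun y => f x y) := fun x => hf.comp (Continuous.prodMk_right x)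
  have hFy : ∀ x, Continuous (fun y => F x y) := fun x => hF.comp (Continuous.prodMk_right x)
  have hphi_ex : ∀ x, ∃ y ∈ Y, f x y = phi f Y x ∧ ∀ z ∈ Y, f x y ≤ f x z := by
    intro x
    obtain ⟨y, hy, h1, h2⟩ := aux_sInf_attained hY hYne (hfy x).continuousOn
    exact ⟨y, hy, h1.symm, h2⟩
  have hphi_le : ∀ x, ∀ y ∈ Y, phi f Y x ≤ f x y := by
    intro x y hy
    obtain ⟨y₀, _, he, hm⟩ := hphi_ex x
    rw [← he]; exact hm y hy
  have hSeps_cpt : ∀ (ε : ℝ) (x : EuclideanSpace ℝ (Fin n)), IsCompact (Seps f Y ε x) := by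
    intro ε x
    have : Seps f Y ε x = Y ∩ {y | f x y ≤ phi f Y x + ε} := rfl
    rw [this]
    exact hY.inter_right (isClosed_le (hfy x) continuous_const)
  have hSeps_ne : ∀ (ε : ℝ) (x : EuclideanSpace ℝ (Fin n)), 0 ≤ ε → (Seps f Y ε x).Nonempty := by
    intro ε x hε
    obtain ⟨y, hy, he, _⟩ := hphi_ex x
    exact ⟨y, hy, by rw [he]; linarith⟩
  have hSex_eq : ∀ x, Seps f Y 0 x = Sexact f Y x := by
    intro x; ext y
    simp only [Seps, Sexact, mem_setOf_eq, add_zero]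
    exact ⟨fun ⟨h1, h2⟩ => ⟨h1, le_antisymm h2 (hphi_le x y h1)⟩,
           fun ⟨h1, h2⟩ => ⟨h1, le_of_eq h2⟩⟩
  have hSex_cpt : ∀ x, IsCompact (Sexact f Y x) := fun x => (hSex_eq x) ▸ hSeps_cpt 0 x
  have hSex_ne : ∀ x, (Sexact f Y x).Nonempty := fun x => (hSex_eq x) ▸ hSeps_ne 0 x le_rfl
  have hSex_subSeps : ∀ (ε : ℝ) (x : EuclideanSpace ℝ (Fin n)), 0 ≤ ε →
      Sexact f Y x ⊆ Seps f Y ε x := by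
    intro ε x hε y hy
    exact ⟨hy.1, by rw [hy.2]; linarith⟩
  have hphi_diff : ∀ x x' (c : ℝ), (∀ y ∈ Y, |f x y - f x' y| ≤ c) →
      |phi f Y x - phi f Y x'| ≤ c := by
    intro x x' c hc
    obtain ⟨y, hy, hey, _⟩ := hphi_ex x
    obtain ⟨y', hy', hey', _⟩ := hphi_ex x'
    have h1 := hphi_le x y' hy'
    have h2 := hphi_le x' y hy
    have h3 := hc y hy
    have h4 := hc y' hy'
    rw [abs_le] at h3 h4 ⊢
    constructor <;> linarith [h3.1, h3.2, h4.1, h4.2]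
  have hXY := hX.prod hY
  have hFu := uniformContinuousOn_iff.mp (hXY.uniformContinuousOn_of_continuous hF.continuousOn)
  have hfu := uniformContinuousOn_iff.mp (hXY.uniformContinuousOn_of_continuous hf.continuousOn)
  have hx₀U : x₀ ∈ U ∩ X := ⟨mem_of_mem_nhds hU, hx₀⟩
  have key : ∀ η > (0:ℝ), ∀ᶠ k in atTop,
      |psiO F f Y (εk k) (xk k) - psiO F f Y 0 x₀| ≤ η ∧
      |psiP F f Y (εk k) (xk k) - psiP F f Y 0 x₀| ≤ η := by
    intro η hη
    obtain ⟨δF, hδF, hFδ⟩ := hFu η hη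
    have h3pos : (0:ℝ) < δF / 3 := by linarith
    set η' : ℝ := μ * (δF / 3) ^ 2 / 2 with hη'def
    have hη'pos : 0 < η' := by positivity
    obtain ⟨δf, hδf, hfδ⟩ := hfu η' hη'pos
    have hδm : 0 < min δf δF := lt_min hδf hδF
    have hev1 : ∀ᶠ k in atTop, xk k ∈ U := hxkt hU
    have hev2 : ∀ᶠ k in atTop, dist (xk k) x₀ < min δf δF :=
      (hxkt.eventually (Metric.ball_mem_nhds x₀ hδm)).mono
        (fun k hk => by simpa [Metric.mem_ball] using hk)
    have hεsmall : (0:ℝ) < μ * (δF / 3) ^ 2 := by positivity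
    have hev3 : ∀ᶠ k in atTop, εk k < μ * (δF / 3) ^ 2 := hεkt.eventually (gt_mem_nhds hεsmall)
    have hsq : Real.sqrt (2 * η' / μ) = δF / 3 := by
      have e : 2 * η' / μ = (δF / 3) ^ 2 := by
        rw [hη'def]; field_simp
      rw [e, Real.sqrt_sq h3pos.le]
    filter_upwards [hev1, hev2, hev3] with k hkU hkd hkε
    set x := xk k with hxdef
    have hxX := hxkX k
    have hxUX : x ∈ U ∩ X := ⟨hkU, hxX⟩
    have hε0 := hεknn k
    set ε := εk k with hεdef
    have hfclose : ∀ y ∈ Y, |f x y - f x₀ y| ≤ η' := by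
      intro y hy
      have hd : dist ((x, y) : _ × _) (x₀, y) < δf := by
        rw [Prod.dist_eq]
        simp only [dist_self]
        exact max_lt (hkd.trans_le (min_le_left _ _)) hδf
      have := hfδ (x, y) (Set.mk_mem_prod hxX hy) (x₀, y) (Set.mk_mem_prod hx₀ hy) hd
      rw [Real.dist_eq] at this
      exact this.le
    have hφclose : |phi f Y x - phi f Y x₀| ≤ η' := hphi_diff x x₀ η' hfclose
    have hAB : ∀ a ∈ Seps f Y ε x, ∃ b ∈ Seps f Y 0 x₀, |F x a - F x₀ b| ≤ η := by
      intro a ha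
      have haY := ha.1
      have hfa : f x a ≤ phi f Y x + ε := ha.2
      have hqg := hQG x hxUX a haY
      have hd1 : Metric.infDist a (Sexact f Y x) ≤ Real.sqrt (ε / μ) := by
        rw [Real.le_sqrt Metric.infDist_nonneg (div_nonneg hε0 hμ.le), le_div_iff₀ hμ, mul_comm]
        linarith
      obtain ⟨z, hz, hdz⟩ := (hSex_cpt x).exists_infDist_eq_dist (hSex_ne x) a
      have hzY := hz.1
      have hfz : f x z = phi f Y x := hz.2
      have h2 : f x₀ z ≤ phi f Y x₀ + 2 * η' := by
        have h3 := hfclose z hzY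
        rw [abs_le] at h3 hφclose
        linarith [h3.1, hφclose.2]
      have hqg0 := hQG x₀ hx₀U z hzY
      have hd2 : Metric.infDist z (Sexact f Y x₀) ≤ δF / 3 := by
        rw [← hsq, Real.le_sqrt Metric.infDist_nonneg
          (div_nonneg (by linarith) hμ.le), le_div_iff₀ hμ, mul_comm]
        linarith
      obtain ⟨b, hb, hdb⟩ := (hSex_cpt x₀).exists_infDist_eq_dist (hSex_ne x₀) z
      have hbY := hb.1
      refine ⟨b, by rw [hSex_eq x₀]; exact hb, ?_⟩
      have hdab : dist a b < δF := by
        have t1 : dist a z ≤ Real.sqrt (ε / μ) := hdz ▸ hd1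
        have t2 : dist z b ≤ δF / 3 := hdb ▸ hd2
        have t3 : Real.sqrt (ε / μ) < δF / 3 := by
          have hlt : ε / μ < (δF / 3) ^ 2 := by
            rw [div_lt_iff₀ hμ]; nlinarith [hkε]
          calc Real.sqrt (ε / μ) < Real.sqrt ((δF / 3) ^ 2) :=
                Real.sqrt_lt_sqrt (div_nonneg hε0 hμ.le) hlt
            _ = δF / 3 := Real.sqrt_sq h3pos.le
        calc dist a b ≤ dist a z + dist z b := dist_triangle a z b
          _ < δF := by linarith
      have hdp : dist ((x, a) : _ × _) (x₀, b) < δF := by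
        rw [Prod.dist_eq]
        exact max_lt (hkd.trans_le (min_le_right _ _)) hdab
      have := hFδ (x, a) (Set.mk_mem_prod hxX haY) (x₀, b) (Set.mk_mem_prod hx₀ hbY) hdp
      rw [Real.dist_eq] at this
      exact this.le
    have hBA : ∀ b ∈ Seps f Y 0 x₀, ∃ a ∈ Seps f Y ε x, |F x a - F x₀ b| ≤ η := by
      intro b hb
      rw [hSex_eq x₀] at hb
      have hbY := hb.1
      have hfb : f x₀ b = phi f Y x₀ := hb.2
      have h2 : f x b ≤ phi f Y x + 2 * η' := by
        have h3 := hfclose b hbY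
        rw [abs_le] at h3 hφclose
        linarith [h3.2, hφclose.1]
      have hqg := hQG x hxUX b hbY
      have hd : Metric.infDist b (Sexact f Y x) ≤ δF / 3 := by
        rw [← hsq, Real.le_sqrt Metric.infDist_nonneg
          (div_nonneg (by linarith) hμ.le), le_div_iff₀ hμ, mul_comm]
        linarith
      obtain ⟨a, ha, hda⟩ := (hSex_cpt x).exists_infDist_eq_dist (hSex_ne x) b
      have haY := ha.1
      refine ⟨a, hSex_subSeps ε x hε0 ha, ?_⟩
      have hdab : dist a b < δF := by
        have t : dist b a ≤ δF / 3 := hda ▸ hd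
        rw [dist_comm]; linarith
      have hdp : dist ((x, a) : _ × _) (x₀, b) < δF := by
        rw [Prod.dist_eq]
        exact max_lt (hkd.trans_le (min_le_right _ _)) hdab
      have := hFδ (x, a) (Set.mk_mem_prod hxX haY) (x₀, b) (Set.mk_mem_prod hx₀ hbY) hdp
      rw [Real.dist_eq] at this
      exact this.le
    have hcomp := aux_close_inf_sup (hSeps_cpt ε x) (hSeps_ne ε x hε0)
      (hSeps_cpt 0 x₀) (hSeps_ne 0 x₀ le_rfl)
      (hFy x).continuousOn (hFy x₀).continuousOn hAB hBA
    simpa only [psiO, psiP] using hcomp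
  have hO : Tendsto (fun k => psiO F f Y (εk k) (xk k)) atTop (nhds (psiO F f Y 0 x₀)) := by
    rw [Metric.tendsto_atTop]
    intro η hη
    obtain ⟨N, hN⟩ := eventually_atTop.mp (key (η / 2) (by linarith))
    exact ⟨N, fun k hk => by have := (hN k hk).1; rw [Real.dist_eq]; linarith⟩
  have hP : Tendsto (fun k => psiP F f Y (εk k) (xk k)) atTop (nhds (psiP F f Y 0 x₀)) := by
    rw [Metric.tendsto_atTop]
    intro η hη
    obtain ⟨N, hN⟩ := eventually_atTop.mp (key (η / 2) (by linarith))
    exact ⟨N, fun k hk => by have := (hN k hk).2; rw [Real.dist_eq]; linarith⟩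
  exact ⟨hO, hP, by simpa only [Delta] using hP.sub hO⟩
end
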